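/- arXiv:1304.6297 — 2 statements merged into one kernel-verified Lean document; each statement's English description precedes it below -/
import Mathlib

section
/- Suppose σ ⊎ γ ⋈_C σ̄ ⊎ γ̄, where dom(γ) ∩ dom(σ) = ∅ and dom(γ̄) ∩ dom(σ̄) = ∅, dom(σ) = dom(σ̄), dom(γ) = dom(γ̄), and let g be a guard whose constants all lie in C and whose variables lie in dom(σ) ∪ dom(γ). Then γ ⊨ σ(g) if and only if γ̄ ⊨ σ̄(g), i.e., the combined assignment σ ⊎ γ satisfies g iff σ̄ ⊎ γ̄ satisfies g. -/
noncomputable section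
open Classical

/-- A substitution: a partial map from variables to letters. -/
def dom {X A : Type*} (σ : X → Option A) : Set X := {x | σ x ≠ none}

def codom {X A : Type*} (σ : X → Option A) : Set A := {a | ∃ x, σ x = some a}

/-- C-coherence of two substitutions with equal domains. -/
def Coh {X A : Type*} (C : Set A) (σ' σ : X → Option A) : Prop :=
  dom σ' = dom σ ∧
  (∀ x a b, σ' x = some a → σ x = some b →
      (a ∈ C ↔ b ∈ C) ∧ ((a ∈ C ∨ b ∈ C) → a = b)) ∧
  (∀ x y a b a' b', σ' x = some a → σ' y = some b →
      σ x = some a' → σ y = some b' → (a = b ↔ a' = b'))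

/-- Union of two substitutions (intended for disjoint domains). -/
def union {X A : Type*} (σ γ : X → Option A) : X → Option A :=
  fun x => match σ x with | some a => some a | none => γ x

/-- Restriction of a substitution to a set of variables. -/
def restrict {X A : Type*} (σ : X → Option A) (D : Set X) : X → Option A :=
  fun x => if x ∈ D then σ x else none

/-- The singleton substitution {x ↦ a}. -/
def single {X A : Type*} (x : X) (a : A) : X → Option A :=
  fun z => if z = x then some a else none

/-- Atomic guard: (a = x) with a a constant, or (x = y) between variables. -/
inductive Atom (X A : Type*) where
  | const : A → X → Atom X A
  | eq : X → X → Atom X A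

/-- A guard is a finite conjunction (list) of atoms. -/
abbrev Guard (X A : Type*) := List (Atom X A)

def atomVars {X A : Type*} : Atom X A → Set X
  | Atom.const _ x => {x}
  | Atom.eq x y => {x, y}

def atomConsts {X A : Type*} : Atom X A → Set A
  | Atom.const a _ => {a}
  | Atom.eq _ _ => ∅

/-- The variables occurring in a guard. -/
def gvars {X A : Type*} (g : Guard X A) : Set X := {x | ∃ t ∈ g, x ∈ atomVars t}

/-- The constants occurring in a guard. -/
def gconsts {X A : Type*} (g : Guard X A) : Set A := {a | ∃ t ∈ g, a ∈ atomConsts t}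

/-- A (partial) substitution satisfies a guard if every atom holds (all values defined). -/
def sat {X A : Type*} (σ : X → Option A) (g : Guard X A) : Prop :=
  ∀ t ∈ g, match t with
    | Atom.const a x => σ x = some a
    | Atom.eq x y => σ x ≠ none ∧ σ x = σ y


lemma coh_symm {X A : Type*} (C : Set A) (τ τ' : X → Option A) (h : Coh C τ τ') :
    Coh C τ' τ := by
  obtain ⟨h1, h2, h3⟩ := h
  refine ⟨h1.symm, fun x a b ha hb => ?_, fun x y a b a' b' hx hy hx' hy' => ?_⟩
  · obtain ⟨hC, hE⟩ := h2 x b a hb ha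
    exact ⟨hC.symm, fun h => (hE h.symm).symm⟩
  · exact (h3 x y a' b' a b hx' hy' hx hy).symm

lemma mem_dom_iff {X A : Type*} (τ : X → Option A) (x : X) :
    x ∈ dom τ ↔ ∃ a, τ x = some a := by
  simp [dom, Option.ne_none_iff_exists']

lemma sat_mono {X A : Type*} (C : Set A) (τ τ' : X → Option A)
    (hcoh : Coh C τ τ') (g : Guard X A) (hc : gconsts g ⊆ C)
    (hv : gvars g ⊆ dom τ) (hs : sat τ g) : sat τ' g := by
  obtain ⟨h1, h2, h3⟩ := hcoh
  intro t ht
  have hst := hs t ht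
  cases t with
  | const a x =>
    simp only at hst ⊢
    have hxd : x ∈ dom τ := hv ⟨_, ht, by simp [atomVars]⟩
    have hxd' : x ∈ dom τ' := h1 ▸ hxd
    obtain ⟨b, hb⟩ := (mem_dom_iff τ' x).mp hxd'
    have haC : a ∈ C := hc ⟨_, ht, by simp [atomConsts]⟩
    obtain ⟨_, hE⟩ := h2 x a b hst hb
    rw [hb, hE (Or.inl haC)]
  | eq x y =>
    simp only at hst ⊢
    obtain ⟨hnx, hxy⟩ := hst
    obtain ⟨a, ha⟩ := Option.ne_none_iff_exists'.mp hnx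
    have hyd : y ∈ dom τ := hv ⟨_, ht, by simp [atomVars]⟩
    have hxd : x ∈ dom τ := hv ⟨_, ht, by simp [atomVars]⟩
    obtain ⟨a', ha'⟩ := (mem_dom_iff τ' x).mp (h1 ▸ hxd)
    obtain ⟨b', hb'⟩ := (mem_dom_iff τ' y).mp (h1 ▸ hyd)
    have hya : τ y = some a := hxy ▸ ha
    have := (h3 x y a a a' b' ha hya ha' hb').mp rfl
    refine ⟨by simp [ha'], ?_⟩
    rw [ha', hb', this]

lemma dom_union_eq {X A : Type*} (σ γ : X → Option A) :
    dom (union σ γ) = dom σ ∪ dom γ := by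
  ext x
  simp only [dom, union, Set.mem_setOf_eq, Set.mem_union]
  cases h : σ x <;> simp [h]

/-- Coherent combined assignments satisfy the same guards with constants in C. -/
theorem stmt_11 {X A : Type*} (C : Set A) (σ γ σ' γ' : X → Option A)
    (hd1 : dom γ ∩ dom σ = ∅) (hd2 : dom γ' ∩ dom σ' = ∅)
    (hd3 : dom σ = dom σ') (hd4 : dom γ = dom γ')
    (hcoh : Coh C (union σ γ) (union σ' γ'))
    (g : Guard X A) (hc : gconsts g ⊆ C) (hv : gvars g ⊆ dom σ ∪ dom γ) :
    sat (union σ γ) g ↔ sat (union σ' γ') g := by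
  have hv1 : gvars g ⊆ dom (union σ γ) := by rw [dom_union_eq]; exact hv
  have hv2 : gvars g ⊆ dom (union σ' γ') := by rw [← hcoh.1]; exact hv1
  exact ⟨sat_mono C _ _ hcoh g hc hv1,
    sat_mono C _ _ (coh_symm C _ _ hcoh) g hc hv2⟩
end
end

section
/- Multi-step extension lemma: let S₁, S₂ ⊆ Σ with C = S₁ ∩ S₂, and suppose S₂ \ S₁ is infinite. Let M₁, γ₁ be substitutions into S₁ with disjoint domains and M₂ a substitution into S₂ with M₁ ⋈_C M₂. Then there exists a substitution γ₂ into S₂ with dom(γ₂) = dom(γ₁) such that (M₁ ⊎ γ₁) ⋈_C (M₂ ⊎ γ₂). (Proved by induction on |dom(γ₁)|, extending one variable at a time.) -/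
noncomputable section
open Classical

/-!
Coherence `Coh C σ τ` says exactly that `τ = Option.map f ∘ σ` for a letter renaming `f` that is
injective on the letters of `σ`, fixes those in `C` and sends the others outside `C`. So it
suffices to extend the renaming read off from `M₁ ⋈_C M₂` to the finitely many new letters of
`γ₁`: letters of `C` are fixed, and every other new letter is sent injectively to a fresh letter
of `S₂ \ S₁` outside the finite set `codom M₂`. Since `S₂ \ S₁` misses `C`, fresh letters
never collide with the fixed ones. Then `γ₂ := Option.map f ∘ γ₁`.
-/

open Set

section

variable {X A : Type*}

lemma codom_finite {σ : X → Option A} (h : (dom σ).Finite) : (codom σ).Finite := by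
  refine ((h.image σ).preimage (Option.some_injective A).injOn).subset ?_
  rintro a ⟨x, hx⟩
  exact ⟨x, by simp [dom, hx], hx⟩

lemma codom_map (f : A → A) (σ : X → Option A) : codom (Option.map f ∘ σ) = f '' codom σ := by
  ext b
  simp only [codom, Function.comp_apply, Option.map_eq_some_iff, mem_ofPred_eq, mem_image]
  tauto

lemma codom_union_subset (σ γ : X → Option A) : codom (union σ γ) ⊆ codom σ ∪ codom γ := by
  rintro a ⟨x, hx⟩
  unfold union at hx
  cases h : σ x with
  | some c => rw [h] at hx; exact Or.inl ⟨x, h.trans hx⟩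
  | none => rw [h] at hx; exact Or.inr ⟨x, hx⟩

lemma map_comp_union (f : A → A) (σ γ : X → Option A) :
    Option.map f ∘ union σ γ = union (Option.map f ∘ σ) (Option.map f ∘ γ) := by
  funext x
  simp only [union, Function.comp_apply]
  cases σ x <;> rfl

lemma map_comp_eq_of_eqOn {f g : A → A} {σ : X → Option A} (h : EqOn f g (codom σ)) :
    Option.map f ∘ σ = Option.map g ∘ σ := by
  funext x
  cases hx : σ x with
  | none => simp [hx]
  | some a => simp [hx, h ⟨x, hx⟩]

lemma image_piecewise_union_subset (s t : Set A) (f g : A → A) [∀ a, Decidable (a ∈ s)] :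
    s.piecewise f g '' (s ∪ t) ⊆ f '' s ∪ g '' t := by
  rintro _ ⟨a, ha, rfl⟩
  by_cases has : a ∈ s
  · exact Or.inl ⟨a, has, (s.piecewise_eq_of_mem f g has).symm⟩
  · exact Or.inr ⟨a, ha.resolve_left has, (s.piecewise_eq_of_notMem f g has).symm⟩

structure IsCRenamingOn (C : Set A) (f : A → A) (E : Set A) : Prop where
  injOn : InjOn f E
  eqOn : EqOn f id (E ∩ C)
  mapsTo : MapsTo f (E \ C) Cᶜ

namespace IsCRenamingOn

variable {C E F : Set A} {f g : A → A}

lemma mono (hf : IsCRenamingOn C f F) (h : E ⊆ F) : IsCRenamingOn C f E :=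
  ⟨hf.injOn.mono h, hf.eqOn.mono (inter_subset_inter_left C h),
    hf.mapsTo.mono_left (sdiff_subset_sdiff_left h)⟩

lemma congr (hf : IsCRenamingOn C f E) (h : EqOn f g E) : IsCRenamingOn C g E where
  injOn := hf.injOn.congr h
  eqOn _ ha := (h ha.1).symm.trans (hf.eqOn ha)
  mapsTo := hf.mapsTo.congr (h.mono sdiff_subset)

lemma mem_iff (hf : IsCRenamingOn C f E) {a : A} (ha : a ∈ E) : f a ∈ C ↔ a ∈ C := by
  by_cases haC : a ∈ C
  · simp only [hf.eqOn ⟨ha, haC⟩, id, haC]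
  · simpa [haC] using hf.mapsTo ⟨ha, haC⟩

lemma id_self (C : Set A) : IsCRenamingOn C id C :=
  ⟨injOn_id C, fun _ _ => rfl, fun _ ha => absurd ha.1 ha.2⟩

lemma of_mapsTo_compl (hE : Disjoint E C) (hinj : InjOn f E) (hmaps : MapsTo f E Cᶜ) :
    IsCRenamingOn C f E where
  injOn := hinj
  eqOn _ ha := absurd ha.2 (hE.notMem_of_mem_left ha.1)
  mapsTo := hmaps.mono_left sdiff_subset

lemma piecewise [∀ a, Decidable (a ∈ E)] (hf : IsCRenamingOn C f E) (hg : IsCRenamingOn C g F)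
    (hdisj : Disjoint (f '' E) (g '' (F \ E))) :
    IsCRenamingOn C (E.piecewise f g) (E ∪ F) := by
  have hfE : IsCRenamingOn C (E.piecewise f g) E := hf.congr (E.piecewise_eqOn f g).symm
  have hgF : IsCRenamingOn C (E.piecewise f g) (F \ E) :=
    (hg.mono sdiff_subset).congr fun a ha => (E.piecewise_eq_of_notMem f g ha.2).symm
  rw [← union_sdiff_self]
  refine ⟨(injOn_union disjoint_sdiff_right).2 ⟨hfE.injOn, hgF.injOn, ?_⟩, ?_, ?_⟩
  · intro a ha b hb hab
    rw [E.piecewise_eq_of_mem f g ha, E.piecewise_eq_of_notMem f g hb.2] at hab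
    exact hdisj.ne_of_mem (mem_image_of_mem f ha) (mem_image_of_mem g hb) hab
  · rintro a ⟨ha | ha, haC⟩
    exacts [hfE.eqOn ⟨ha, haC⟩, hgF.eqOn ⟨ha, haC⟩]
  · rintro a ⟨ha | ha, haC⟩
    exacts [hfE.mapsTo ⟨ha, haC⟩, hgF.mapsTo ⟨ha, haC⟩]

lemma disjoint_image_diff (hf : IsCRenamingOn C f E) : Disjoint (f '' E) (C \ E) := by
  rw [disjoint_left]
  rintro _ ⟨a, ha, rfl⟩ ⟨hfaC, hfaE⟩
  have haC : a ∈ C := (hf.mem_iff ha).1 hfaC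
  exact hfaE (by rwa [hf.eqOn ⟨ha, haC⟩])

lemma exists_extend (hf : IsCRenamingOn C f E) (hE : E.Finite) (hF : F.Finite) {T : Set A}
    (hT : T.Infinite) (hTC : Disjoint T C) :
    ∃ g, EqOn g f E ∧ IsCRenamingOn C g (E ∪ F) ∧ g '' (E ∪ F) ⊆ f '' E ∪ C ∪ T := by
  set f₁ := E.piecewise f id
  have hf₁ : IsCRenamingOn C f₁ (E ∪ C) :=
    hf.piecewise (.id_self C) (by simpa using hf.disjoint_image_diff)
  have hf₁E : f₁ '' (E ∪ C) ⊆ f '' E ∪ C := by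
    simpa only [image_id] using image_piecewise_union_subset E C f id
  set D := F \ (E ∪ C)
  set T' := T \ f '' E
  have hT'fresh : Disjoint (f '' E ∪ C) T' :=
    disjoint_union_left.2 ⟨disjoint_sdiff_right, (hTC.mono_left sdiff_subset).symm⟩
  have : Nonempty A := ⟨hT.nonempty.some⟩
  obtain ⟨h, hhD, hhinj⟩ :=
    (hF.subset sdiff_subset : D.Finite).exists_injOn_of_encard_le (t := T')
      (by rw [(hT.sdiff (hE.image f)).encard_eq]; exact le_top)
  have hg : IsCRenamingOn C ((E ∪ C).piecewise f₁ h) ((E ∪ C) ∪ D) := by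
    refine hf₁.piecewise (.of_mapsTo_compl ?_ hhinj ?_) ?_
    · exact disjoint_left.2 fun a ha haC => ha.2 (Or.inr haC)
    · exact fun a ha => hT'fresh.notMem_of_mem_right (hhD ha) ∘ Or.inr
    · exact hT'fresh.mono hf₁E (image_subset_iff.2 (sdiff_subset.trans hhD))
  have hcover : E ∪ F ⊆ (E ∪ C) ∪ D :=
    union_subset (subset_union_left.trans subset_union_left) (sdiff_subset_iff.1 subset_rfl)
  refine ⟨(E ∪ C).piecewise f₁ h, fun a ha => ?_, hg.mono hcover, ?_⟩
  · exact ((E ∪ C).piecewise_eq_of_mem f₁ h (Or.inl ha)).trans (E.piecewise_eq_of_mem f id ha)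
  · refine (image_mono hcover).trans ((image_piecewise_union_subset _ _ _ _).trans ?_)
    exact union_subset_union hf₁E ((image_subset_iff.2 hhD).trans sdiff_subset)

end IsCRenamingOn

lemma coh_map {C : Set A} {f : A → A} {σ : X → Option A} (hf : IsCRenamingOn C f (codom σ)) :
    Coh C σ (Option.map f ∘ σ) := by
  refine ⟨by ext x; simp [dom], ?_, ?_⟩
  · intro x a b hxa hxb
    simp only [Function.comp_apply, hxa, Option.map_some, Option.some.injEq] at hxb
    subst hxb
    have ha : a ∈ codom σ := ⟨x, hxa⟩
    refine ⟨(hf.mem_iff ha).symm, fun h => ?_⟩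
    rw [hf.mem_iff ha, or_self] at h
    exact (hf.eqOn ⟨ha, h⟩).symm
  · intro x y a b a' b' hxa hyb hxa' hyb'
    simp only [Function.comp_apply, hxa, hyb, Option.map_some, Option.some.injEq] at hxa' hyb'
    subst hxa' hyb'
    exact ⟨congrArg f, fun h => hf.injOn ⟨x, hxa⟩ ⟨y, hyb⟩ h⟩

lemma Coh.exists_eq_map {C : Set A} {σ τ : X → Option A} (h : Coh C σ τ) :
    ∃ f, IsCRenamingOn C f (codom σ) ∧ τ = Option.map f ∘ σ := by
  obtain ⟨hdom, hC, heq⟩ := h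
  have hτ : ∀ x a, σ x = some a → ∃ b, τ x = some b := fun x a hx => by
    have hx' : x ∈ dom τ := hdom ▸ (by simp [dom, hx] : x ∈ dom σ)
    exact Option.ne_none_iff_exists'.1 hx'
  let f a := if h : a ∈ codom σ then (τ h.choose).getD a else a
  have hf : ∀ x a, σ x = some a → τ x = some (f a) := by
    intro x a hx
    have ha : a ∈ codom σ := ⟨x, hx⟩
    obtain ⟨b, hb⟩ := hτ x a hx
    obtain ⟨b', hb'⟩ := hτ _ a ha.choose_spec
    simp only [f, dif_pos ha, hb', Option.getD_some, hb,
      ← (heq x _ a a b b' hx ha.choose_spec hb hb').1 rfl]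
  have hmap : τ = Option.map f ∘ σ := by
    funext x
    cases hx : σ x with
    | some a => simp [hf x a hx, hx]
    | none =>
      have hx' : x ∉ dom τ := hdom ▸ (by simp [dom, hx] : x ∉ dom σ)
      simpa [dom, hx] using hx'
  refine ⟨f, ⟨?_, ?_, ?_⟩, hmap⟩
  · rintro a ⟨x, hx⟩ b ⟨y, hy⟩ hab
    exact (heq x y a b (f a) (f b) hx hy (hf x a hx) (hf y b hy)).2 hab
  · rintro a ⟨⟨x, hx⟩, haC⟩
    exact ((hC x a (f a) hx (hf x a hx)).2 (Or.inl haC)).symm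
  · rintro a ⟨⟨x, hx⟩, haC⟩
    exact fun hfa => haC ((hC x a (f a) hx (hf x a hx)).1.2 hfa)

end

theorem stmt_13_general {X A : Type*} (S₁ S₂ : Set A) (C : Set A) (hC : C = S₁ ∩ S₂)
    (hinf : (S₂ \ S₁).Infinite)
    (M₁ γ₁ M₂ : X → Option A)
    (hM₂ : codom M₂ ⊆ S₂)
    (hfinM : (dom M₁).Finite) (hfinγ : (dom γ₁).Finite)
    (hcoh : Coh C M₁ M₂) :
    ∃ γ₂ : X → Option A, dom γ₂ = dom γ₁ ∧ codom γ₂ ⊆ S₂ ∧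
      Coh C (union M₁ γ₁) (union M₂ γ₂) := by
  obtain ⟨f₀, hf₀, rfl⟩ := hcoh.exists_eq_map
  rw [codom_map] at hM₂
  have hfresh : Disjoint (S₂ \ S₁) C := by
    rw [hC, disjoint_left]
    exact fun a ha haC => ha.2 haC.1
  obtain ⟨f, hff₀, hf, hfS⟩ :=
    hf₀.exists_extend (codom_finite hfinM) (codom_finite hfinγ) hinf hfresh
  have hfS₂ : f '' (codom M₁ ∪ codom γ₁) ⊆ S₂ :=
    hfS.trans (union_subset (union_subset hM₂ (hC ▸ inter_subset_right)) sdiff_subset)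
  refine ⟨Option.map f ∘ γ₁, by ext; simp [dom], ?_, ?_⟩
  · rw [codom_map]
    exact (image_mono subset_union_right).trans hfS₂
  · rw [map_comp_eq_of_eqOn hff₀.symm, ← map_comp_union]
    exact coh_map (hf.mono (codom_union_subset M₁ γ₁))

/-- Multi-step extension lemma. -/
theorem stmt_13 {X A : Type*} (S₁ S₂ : Set A) (C : Set A) (hC : C = S₁ ∩ S₂)
    (hinf : (S₂ \ S₁).Infinite)
    (M₁ γ₁ M₂ : X → Option A)
    (hM₁ : codom M₁ ⊆ S₁) (hγ₁ : codom γ₁ ⊆ S₁) (hM₂ : codom M₂ ⊆ S₂)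
    (hdisj : dom M₁ ∩ dom γ₁ = ∅)
    (hfinM : (dom M₁).Finite) (hfinγ : (dom γ₁).Finite)
    (hcoh : Coh C M₁ M₂) :
    ∃ γ₂ : X → Option A, dom γ₂ = dom γ₁ ∧ codom γ₂ ⊆ S₂ ∧
      Coh C (union M₁ γ₁) (union M₂ γ₂) :=
  stmt_13_general S₁ S₂ C hC hinf M₁ γ₁ M₂ hM₂ hfinM hfinγ hcoh
end
end
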